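/- arXiv:2112.13590 — 2 statements merged into one kernel-verified Lean document; each statement's English description precedes it below -/
import Mathlib

section
/- Let C and K be convex bodies in ℝ^n with 0 in the interior of K ∩ C. Then K ∩ C is optimally contained in conv(K ∪ C) if and only if ((K° + C°)/2)° is optimally contained in (K + C)/2. -/
open Pointwise RealInnerProductSpace

variable {E : Type*} [NormedAddCommGroup E] [InnerProductSpace ℝ E]

/-- `K` is optimally contained in `C`: `K ⊆ C` and there is no `ρ ∈ [0,1)` and
translation `t` with `K ⊆ ρ • C + {t}`. -/
def OptCont (K C : Set E) : Prop :=
  K ⊆ C ∧ ¬∃ ρ : ℝ, 0 ≤ ρ ∧ ρ < 1 ∧ ∃ t : E, K ⊆ ρ • C + {t}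

/-- The polar set `C° = {a | ∀ x ∈ C, ⟪a,x⟫ ≤ 1}`. -/
def polarSet (C : Set E) : Set E := {a : E | ∀ x ∈ C, ⟪a, x⟫ ≤ 1}

/-- The Minkowski asymmetry of `C`. -/
noncomputable def minkAsym (C : Set E) : ℝ :=
  sInf {ρ : ℝ | 0 < ρ ∧ ∃ c : E, C - {c} ⊆ ρ • ({c} - C)}

/-- `C` is Minkowski centered if `C ⊆ s(C) • (-C)`. -/
def MinkCentered (C : Set E) : Prop := C ⊆ minkAsym C • (-C)



lemma zero_mem_polarSet (D : Set E) : (0:E) ∈ polarSet D := fun x _ => by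
  simp [polarSet]

lemma polarSet_isClosed (D : Set E) : IsClosed (polarSet D) := by
  have h : polarSet D = ⋂ x ∈ D, {a : E | ⟪a, x⟫ ≤ 1} := by
    ext a; simp [polarSet]
  rw [h]
  exact isClosed_biInter fun x _ =>
    isClosed_le (Continuous.inner continuous_id continuous_const) continuous_const

lemma polarSet_anti {D D' : Set E} (h : D ⊆ D') : polarSet D' ⊆ polarSet D :=
  fun a ha x hx => ha x (h hx)

lemma exists_ball_subset {D : Set E} (h0 : (0:E) ∈ interior D) :
    ∃ r > 0, Metric.ball (0:E) r ⊆ D := by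
  obtain ⟨r, hr, hsub⟩ := Metric.mem_nhds_iff.1 (mem_interior_iff_mem_nhds.1 h0)
  exact ⟨r, hr, hsub⟩

lemma inner_smul_norm (v : E) (c : ℝ) : ⟪v, c • (‖v‖⁻¹ • v)⟫ = c * ‖v‖ ∨ v = 0 := by
  by_cases hv : v = 0
  · exact Or.inr hv
  · left
    rw [real_inner_smul_right, real_inner_smul_right, real_inner_self_eq_norm_mul_norm]
    field_simp

lemma exists_inner_pos {D : Set E} (h0 : (0:E) ∈ interior D) {v : E} (hv : v ≠ 0) :
    ∃ x ∈ D, 0 < ⟪v, x⟫ := by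
  obtain ⟨r, hr, hsub⟩ := exists_ball_subset h0
  refine ⟨(r/2) • (‖v‖⁻¹ • v), hsub ?_, ?_⟩
  · rw [Metric.mem_ball, dist_zero_right, norm_smul, norm_smul, norm_inv, norm_norm]
    have : ‖v‖ ≠ 0 := norm_ne_zero_iff.2 hv
    rw [Real.norm_eq_abs, abs_of_pos (by linarith)]
    field_simp
    linarith
  · rcases inner_smul_norm v (r/2) with h | h
    · rw [h]
      exact mul_pos (by linarith) (norm_pos_iff.2 hv)
    · exact absurd h hv

lemma polarSet_isCompact [FiniteDimensional ℝ E] {D : Set E} (h0 : (0:E) ∈ interior D) :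
    IsCompact (polarSet D) := by
  obtain ⟨r, hr, hsub⟩ := exists_ball_subset h0
  have hb : polarSet D ⊆ Metric.closedBall 0 (2/r) := by
    intro u hu
    rw [Metric.mem_closedBall, dist_zero_right]
    by_cases huz : u = 0
    · simp only [huz, norm_zero]
      have := div_pos (by norm_num : (0:ℝ) < 2) hr
      linarith
    · have hx : (r/2) • (‖u‖⁻¹ • u) ∈ D := by
        apply hsub
        rw [Metric.mem_ball, dist_zero_right, norm_smul, norm_smul, norm_inv, norm_norm]
        have : ‖u‖ ≠ 0 := norm_ne_zero_iff.2 huz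
        rw [Real.norm_eq_abs, abs_of_pos (by linarith)]
        field_simp
        linarith
      have := hu _ hx
      rcases inner_smul_norm u (r/2) with h | h
      · rw [h] at this
        rw [le_div_iff₀ hr]
        nlinarith
      · exact absurd h huz
  exact (isCompact_closedBall (0:E) (2/r)).of_isClosed_subset (polarSet_isClosed D) hb

lemma mem_of_polar_le [FiniteDimensional ℝ E] {D : Set E} (hconv : Convex ℝ D)
    (hcl : IsClosed D) (h0 : (0:E) ∈ D) {w : E}
    (hw : ∀ u ∈ polarSet D, ⟪u, w⟫ ≤ 1) : w ∈ D := by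
  by_contra hwD
  obtain ⟨f, s, hfs, hsf⟩ := geometric_hahn_banach_closed_point hconv hcl hwD
  have hs0 : 0 < s := by simpa using hfs 0 h0
  set g := (InnerProductSpace.toDual ℝ E).symm f with hgdef
  have hg : ∀ x : E, ⟪g, x⟫ = f x := fun x => InnerProductSpace.toDual_symm_apply
  have h1 : s⁻¹ • g ∈ polarSet D := by
    intro x hx
    rw [real_inner_smul_left, hg]
    rw [inv_mul_le_iff₀ hs0]
    simpa using (hfs x hx).le
  have h2 := hw _ h1
  rw [real_inner_smul_left, hg, inv_mul_le_iff₀ hs0, mul_one] at h2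
  linarith

lemma exists_forall_inner_le {D : Set E} (hD : IsCompact D) (hne : D.Nonempty) (v : E) :
    ∃ d ∈ D, ∀ x ∈ D, ⟪v, x⟫ ≤ ⟪v, d⟫ := by
  obtain ⟨d, hd, hmax⟩ := hD.exists_isMaxOn (f := fun x => ⟪v, x⟫) hne
    ((Continuous.inner continuous_const continuous_id).continuousOn)
  exact ⟨d, hd, fun x hx => hmax hx⟩

theorem optCont_iff [FiniteDimensional ℝ E] {X Y : Set E} (hX : IsCompact X)
    (hY : IsCompact Y) (hYconv : Convex ℝ Y) (h0Y : (0:E) ∈ interior Y) :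
    OptCont X Y ↔ (X ⊆ Y ∧ ∀ t : E, ∃ u : E,
      u ∈ polarSet Y ∧ (∃ p ∈ X, ⟪u, p⟫ = 1) ∧ ⟪u, t⟫ ≤ 0) := by
  constructor
  · rintro ⟨hXY, hopt⟩
    refine ⟨hXY, fun t => ?_⟩
    by_contra hcon
    push_neg at hcon
    -- hcon : ∀ u, u ∈ polarSet Y → (∃ p ∈ X, ⟪u,p⟫ = 1) → 0 < ⟪u,t⟫
    apply hopt
    rcases X.eq_empty_or_nonempty with hXe | ⟨x₀, hx₀⟩
    · exact ⟨1/2, by norm_num, by norm_num, 0, by simp [hXe]⟩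
    have hYpol : IsCompact (polarSet Y) := polarSet_isCompact h0Y
    have h0Ymem : (0:E) ∈ Y := interior_subset h0Y
    -- the compact set V of contact pairs
    set V : Set (E × E) := (polarSet Y ×ˢ X) ∩ {w : E × E | ⟪w.1, w.2⟫ = 1} with hVdef
    have hVcomp : IsCompact V := (hYpol.prod hX).inter_right
      (isClosed_eq (Continuous.inner continuous_fst continuous_snd) continuous_const)
    -- get δ > 0 lower bound for ⟪u,t⟫ on V
    obtain ⟨δ, hδ0, hδ⟩ : ∃ δ > 0, ∀ w ∈ V, δ ≤ ⟪w.1, t⟫ := by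
      rcases V.eq_empty_or_nonempty with hVe | hVne
      · exact ⟨1, one_pos, by simp [hVe]⟩
      · obtain ⟨w₀, hw₀, hmin⟩ := hVcomp.exists_isMinOn (f := fun w : E × E => ⟪w.1, t⟫) hVne
          (Continuous.inner continuous_fst continuous_const).continuousOn
        refine ⟨⟪w₀.1, t⟫, hcon w₀.1 hw₀.1.1 ⟨w₀.2, hw₀.1.2, hw₀.2⟩, fun w hw => hmin hw⟩
    -- T and maxima
    set T : Set (E × E) := polarSet Y ×ˢ X with hTdef
    have hTcomp : IsCompact T := hYpol.prod hX
    have hT1 : ∀ w ∈ T, ⟪w.1, w.2⟫ ≤ 1 := fun w hw => hw.1 w.2 (hXY hw.2)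
    -- Ψ : bound on |⟪u,t⟫| on T
    obtain ⟨wΨ, hwΨ, hΨmax⟩ := hTcomp.exists_isMaxOn (f := fun w : E × E => |⟪w.1, t⟫|)
      ⟨(0, x₀), zero_mem_polarSet Y, hx₀⟩
      (((Continuous.inner continuous_fst continuous_const).abs).comp
        (continuous_fst.prodMk continuous_snd)).continuousOn
    set Ψ : ℝ := |⟪wΨ.1, t⟫| with hΨdef
    have hΨ0 : 0 ≤ Ψ := abs_nonneg _
    have hΨ : ∀ w ∈ T, |⟪w.1, t⟫| ≤ Ψ := fun w hw => hΨmax hw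
    -- G
    set G : Set (E × E) := T ∩ {w : E × E | ⟪w.1, t⟫ ≤ δ/2} with hGdef
    have hGcomp : IsCompact G := hTcomp.inter_right
      (isClosed_le (Continuous.inner continuous_fst continuous_const) continuous_const)
    have hGne : G.Nonempty := ⟨(0, x₀), ⟨zero_mem_polarSet Y, hx₀⟩, by
      simp only [Set.mem_setOf_eq, inner_zero_left]; linarith⟩
    obtain ⟨wm, hwm, hmmax⟩ := hGcomp.exists_isMaxOn (f := fun w : E × E => ⟪w.1, w.2⟫)
      hGne (Continuous.inner continuous_fst continuous_snd).continuousOn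
    set m : ℝ := ⟪wm.1, wm.2⟫ with hmdef
    have hm1 : m < 1 := by
      rcases lt_or_eq_of_le (hT1 wm hwm.1) with h | h
      · exact h
      · exfalso
        have hmV : wm ∈ V := ⟨hwm.1, h⟩
        have := hδ wm hmV
        have := hwm.2
        simp only [Set.mem_setOf_eq] at this
        linarith
    have hmG : ∀ w ∈ G, ⟪w.1, w.2⟫ ≤ m := fun w hw => hmmax hw
    -- choose ε and ρ
    set ε : ℝ := min 1 ((1 - m)/(2*(Ψ+1))) with hεdef
    have hε0 : 0 < ε := lt_min one_pos (div_pos (by linarith) (by positivity))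
    have hεΨ : m + ε * Ψ < 1 := by
      have h1 : ε ≤ (1 - m)/(2*(Ψ+1)) := min_le_right _ _
      have h2 : ε * Ψ ≤ (1 - m)/(2*(Ψ+1)) * Ψ := by
        apply mul_le_mul_of_nonneg_right h1 hΨ0
      have h3 : (1 - m)/(2*(Ψ+1)) * Ψ < 1 - m := by
        rw [div_mul_eq_mul_div, div_lt_iff₀ (by positivity)]
        nlinarith
      linarith
    set ρ : ℝ := max (max (m + ε * Ψ) (1 - ε * δ / 2)) (1/2) with hρdef
    have hρpos : 0 < ρ := lt_of_lt_of_le (by norm_num) (le_max_right _ _)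
    have hρ1 : ρ < 1 := by
      apply max_lt (max_lt hεΨ ?_) (by norm_num)
      nlinarith
    refine ⟨ρ, le_of_lt hρpos, hρ1, ε • t, fun x hx => ?_⟩
    -- show x ∈ ρ • Y + {ε • t}
    have hy : ρ⁻¹ • (x - ε • t) ∈ Y := by
      apply mem_of_polar_le hYconv hY.isClosed h0Ymem
      intro u hu
      have hkey : ⟪u, x⟫ - ε * ⟪u, t⟫ ≤ ρ := by
        by_cases hc : ⟪u, t⟫ ≤ δ/2
        · have h1 : ⟪u, x⟫ ≤ m := hmG (u, x) ⟨⟨hu, hx⟩, hc⟩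
          have h2 : |⟪u, t⟫| ≤ Ψ := hΨ (u, x) ⟨hu, hx⟩
          have h3 : -ε * ⟪u, t⟫ ≤ ε * Ψ := by
            rw [neg_mul]
            calc -(ε * ⟪u, t⟫) ≤ |ε * ⟪u, t⟫| := neg_le_abs _
            _ = ε * |⟪u, t⟫| := by rw [abs_mul, abs_of_pos hε0]
            _ ≤ ε * Ψ := by nlinarith
          have : m + ε * Ψ ≤ ρ := le_trans (le_max_left _ _) (le_max_left _ _)
          nlinarith
        · push_neg at hc
          have h1 : ⟪u, x⟫ ≤ 1 := hT1 (u, x) ⟨hu, hx⟩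
          have : 1 - ε * δ / 2 ≤ ρ := le_trans (le_max_right _ _) (le_max_left _ _)
          nlinarith
      rw [real_inner_smul_right, inner_sub_right, real_inner_smul_right,
        inv_mul_le_iff₀ hρpos, mul_one]
      linarith
    refine ⟨ρ • (ρ⁻¹ • (x - ε • t)), Set.smul_mem_smul_set hy, ε • t, rfl, ?_⟩
    rw [smul_smul, mul_inv_cancel₀ (ne_of_gt hρpos), one_smul]
    module
  · rintro ⟨hXY, hstar⟩
    refine ⟨hXY, ?_⟩
    rintro ⟨ρ, hρ0, hρ1, t, hsub⟩
    obtain ⟨u, huY, ⟨p, hpX, hup⟩, hut⟩ := hstar t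
    obtain ⟨a, ha, b, hb, hab⟩ := hsub hpX
    obtain ⟨y, hy, rfl⟩ := ha
    rw [Set.mem_singleton_iff] at hb; subst hb
    have hab' : ρ • y + b = p := hab
    have h1 : ⟪u, y⟫ ≤ 1 := huY y hy
    have h2 : (1:ℝ) = ρ * ⟪u, y⟫ + ⟪u, b⟫ := by
      rw [← hup, ← hab', inner_add_right, real_inner_smul_right]
    nlinarith

lemma mem_half_smul_add {S T : Set E} {a b : E} (ha : a ∈ S) (hb : b ∈ T) :
    (2:ℝ)⁻¹ • (a + b) ∈ (2:ℝ)⁻¹ • (S + T) :=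
  Set.smul_mem_smul_set (Set.add_mem_add ha hb)

lemma polar_M_struct [FiniteDimensional ℝ E] {K C : Set E}
    (h0K : (0:E) ∈ interior K) (h0C : (0:E) ∈ interior C)
    (hKcomp : IsCompact K) (hCcomp : IsCompact C)
    {v : E} (hv : v ∈ polarSet ((2:ℝ)⁻¹ • (K + C))) (hvne : v ≠ 0) :
    ∃ F Ec : ℝ, 0 < F ∧ 0 < Ec ∧ F + Ec ≤ 2 ∧ 2 ≤ F⁻¹ + Ec⁻¹ ∧
      F⁻¹ • v ∈ polarSet K ∧ Ec⁻¹ • v ∈ polarSet C ∧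
      (∀ x ∈ K, ⟪v, x⟫ ≤ F) ∧ (∀ x ∈ C, ⟪v, x⟫ ≤ Ec) := by
  obtain ⟨k₀, hk₀, hFmax⟩ := exists_forall_inner_le hKcomp ⟨0, interior_subset h0K⟩ v
  obtain ⟨c₀, hc₀, hEmax⟩ := exists_forall_inner_le hCcomp ⟨0, interior_subset h0C⟩ v
  set F := ⟪v, k₀⟫ with hFdef
  set Ec := ⟪v, c₀⟫ with hEdef
  obtain ⟨xK, hxK, hxKpos⟩ := exists_inner_pos h0K hvne
  obtain ⟨xC, hxC, hxCpos⟩ := exists_inner_pos h0C hvne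
  have hF : 0 < F := lt_of_lt_of_le hxKpos (hFmax _ hxK)
  have hE : 0 < Ec := lt_of_lt_of_le hxCpos (hEmax _ hxC)
  have hsum : F + Ec ≤ 2 := by
    have h2 := hv _ (mem_half_smul_add hk₀ hc₀)
    rw [real_inner_smul_right, inner_add_right] at h2
    linarith
  have key : (F⁻¹ + Ec⁻¹) * (F * Ec) = F + Ec := by
    field_simp
    ring
  have hharm : 2 ≤ F⁻¹ + Ec⁻¹ := by
    nlinarith [sq_nonneg (F - Ec), mul_pos hF hE]
  refine ⟨F, Ec, hF, hE, hsum, hharm, ?_, ?_, fun x hx => hFmax x hx, fun x hx => hEmax x hx⟩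
  · intro x hx
    rw [real_inner_smul_left, inv_mul_le_iff₀ hF, mul_one]
    exact hFmax x hx
  · intro x hx
    rw [real_inner_smul_left, inv_mul_le_iff₀ hE, mul_one]
    exact hEmax x hx

lemma H_subset_M [FiniteDimensional ℝ E] {K C : Set E}
    (h0K : (0:E) ∈ interior K) (h0C : (0:E) ∈ interior C)
    (hKcomp : IsCompact K) (hCcomp : IsCompact C)
    (hKconv : Convex ℝ K) (hCconv : Convex ℝ C) :
    polarSet ((2:ℝ)⁻¹ • (polarSet K + polarSet C)) ⊆ (2:ℝ)⁻¹ • (K + C) := by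
  intro q hq
  have hMconv : Convex ℝ ((2:ℝ)⁻¹ • (K + C)) := (hKconv.add hCconv).smul _
  have hMcl : IsClosed ((2:ℝ)⁻¹ • (K + C)) := ((hKcomp.add hCcomp).smul ((2:ℝ)⁻¹)).isClosed
  have h0M : (0:E) ∈ (2:ℝ)⁻¹ • (K + C) := by
    have h : (0:E) = (2:ℝ)⁻¹ • ((0:E) + 0) := by simp
    rw [h]
    exact Set.smul_mem_smul_set (Set.add_mem_add (interior_subset h0K) (interior_subset h0C))
  apply mem_of_polar_le hMconv hMcl h0M
  intro v hv
  by_cases hvne : v = 0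
  · subst hvne; rw [inner_zero_left]; norm_num
  obtain ⟨F, Ec, hF, hE, hsum, hharm, hvK, hvC, _, _⟩ :=
    polar_M_struct h0K h0C hKcomp hCcomp hv hvne
  have h2 := hq _ (mem_half_smul_add hvK hvC)
  rw [real_inner_smul_right, inner_add_right, real_inner_smul_right,
    real_inner_smul_right] at h2
  rw [real_inner_comm] at h2
  rcases le_or_gt ⟪v, q⟫ 0 with h | h
  · linarith
  · nlinarith

lemma halfspace_convex (v : E) : Convex ℝ {x : E | ⟪v, x⟫ ≤ 1} := by
  apply convex_halfSpace_le
  exact ⟨fun x y => inner_add_right v x y, fun c x => real_inner_smul_right v x c⟩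

lemma trans21 [FiniteDimensional ℝ E] {K C : Set E}
    (h0K : (0:E) ∈ interior K) (h0C : (0:E) ∈ interior C)
    (hKcomp : IsCompact K) (hCcomp : IsCompact C)
    (hKconv : Convex ℝ K) (hCconv : Convex ℝ C)
    {v q : E} (hv : v ∈ polarSet ((2:ℝ)⁻¹ • (K + C)))
    (hq : q ∈ polarSet ((2:ℝ)⁻¹ • (polarSet K + polarSet C)))
    (hvq : ⟪v, q⟫ = 1) :
    v ∈ polarSet (convexHull ℝ (K ∪ C)) ∧ q ∈ K ∩ C := by
  have hvne : v ≠ 0 := by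
    rintro rfl; rw [inner_zero_left] at hvq; norm_num at hvq
  obtain ⟨F, Ec, hF, hE, hsum, hharm, hvK, hvC, hFmax, hEmax⟩ :=
    polar_M_struct h0K h0C hKcomp hCcomp hv hvne
  have hqv : ⟪q, v⟫ = 1 := by rw [real_inner_comm]; exact hvq
  have h2 := hq _ (mem_half_smul_add hvK hvC)
  rw [real_inner_smul_right, inner_add_right, real_inner_smul_right,
    real_inner_smul_right, hqv, mul_one, mul_one] at h2
  have hinv2 : F⁻¹ + Ec⁻¹ ≤ 2 := by linarith
  have hS : F⁻¹ + Ec⁻¹ = 2 := le_antisymm hinv2 hharm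
  have key : (F⁻¹ + Ec⁻¹) * (F * Ec) = F + Ec := by field_simp; ring
  have keyEq : F + Ec = 2 * (F * Ec) := by rw [← key, hS]
  have hs2 : 2 ≤ F + Ec := by nlinarith [sq_nonneg (F - Ec), mul_pos hF hE]
  have hsE : F + Ec = 2 := le_antisymm hsum hs2
  have hp : F * Ec = 1 := by nlinarith
  have hF1 : F = 1 := by
    have h9a : (F - 1)^2 ≤ 0 := by nlinarith
    have h9 : (F - 1)^2 = 0 := le_antisymm h9a (sq_nonneg _)
    have := pow_eq_zero_iff (n := 2) (by norm_num) |>.mp h9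
    linarith
  have hE1 : Ec = 1 := by linarith
  rw [hF1, inv_one, one_smul] at hvK
  rw [hE1, inv_one, one_smul] at hvC
  constructor
  · intro x hx
    have hsub : convexHull ℝ (K ∪ C) ⊆ {x : E | ⟪v, x⟫ ≤ 1} := by
      apply convexHull_min ?_ (halfspace_convex v)
      rintro y (hy | hy)
      · exact le_of_le_of_eq (hFmax y hy) hF1
      · exact le_of_le_of_eq (hEmax y hy) hE1
    exact hsub hx
  constructor
  · apply mem_of_polar_le hKconv hKcomp.isClosed (interior_subset h0K)
    intro u hu
    obtain ⟨d, hd, hdmax⟩ := exists_forall_inner_le (polarSet_isCompact h0C)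
      ⟨0, zero_mem_polarSet C⟩ q
    have hδ1 : 1 ≤ ⟪q, d⟫ := by
      have h5 := hdmax v hvC
      rw [hqv] at h5
      exact h5
    have h3 := hq _ (mem_half_smul_add hu hd)
    rw [real_inner_smul_right, inner_add_right] at h3
    rw [real_inner_comm]
    linarith
  · apply mem_of_polar_le hCconv hCcomp.isClosed (interior_subset h0C)
    intro u hu
    obtain ⟨d, hd, hdmax⟩ := exists_forall_inner_le (polarSet_isCompact h0K)
      ⟨0, zero_mem_polarSet K⟩ q
    have hδ1 : 1 ≤ ⟪q, d⟫ := by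
      have h5 := hdmax v hvK
      rw [hqv] at h5
      exact h5
    have h3 := hq _ (mem_half_smul_add hd hu)
    rw [real_inner_smul_right, inner_add_right] at h3
    rw [real_inner_comm]
    linarith

theorem stmt_1 {n : ℕ} (K C : Set (EuclideanSpace ℝ (Fin n)))
    (hKcomp : IsCompact K) (hKconv : Convex ℝ K) (hKint : (interior K).Nonempty)
    (hCcomp : IsCompact C) (hCconv : Convex ℝ C) (hCint : (interior C).Nonempty)
    (h0 : 0 ∈ interior (K ∩ C)) :
    OptCont (K ∩ C) (convexHull ℝ (K ∪ C)) ↔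
      OptCont (polarSet ((2:ℝ)⁻¹ • (polarSet K + polarSet C))) ((2:ℝ)⁻¹ • (K + C)) := by
  have h0K : (0 : EuclideanSpace ℝ (Fin n)) ∈ interior K :=
    interior_mono Set.inter_subset_left h0
  have h0C : (0 : EuclideanSpace ℝ (Fin n)) ∈ interior C :=
    interior_mono Set.inter_subset_right h0
  -- basic subset relations
  have hAB : K ∩ C ⊆ convexHull ℝ (K ∪ C) :=
    fun x hx => subset_convexHull ℝ _ (Or.inl hx.1)
  have hAM : K ∩ C ⊆ (2:ℝ)⁻¹ • (K + C) := by
    intro x hx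
    refine ⟨x + x, Set.add_mem_add hx.1 hx.2, ?_⟩
    show (2:ℝ)⁻¹ • (x + x) = x
    rw [smul_add]
    module
  have hMB : (2:ℝ)⁻¹ • (K + C) ⊆ convexHull ℝ (K ∪ C) := by
    rintro x ⟨y, ⟨k, hk, c, hc, rfl⟩, rfl⟩
    have h := (convex_convexHull ℝ (K ∪ C))
      (subset_convexHull ℝ _ (Or.inl hk)) (subset_convexHull ℝ _ (Or.inr hc))
      (by norm_num : (0:ℝ) ≤ 2⁻¹) (by norm_num : (0:ℝ) ≤ 2⁻¹) (by norm_num)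
    show (2:ℝ)⁻¹ • (k + c) ∈ convexHull ℝ (K ∪ C)
    rwa [smul_add]
  have hAH : K ∩ C ⊆ polarSet ((2:ℝ)⁻¹ • (polarSet K + polarSet C)) := by
    rintro p hp w ⟨y, ⟨a, ha, b, hb, rfl⟩, rfl⟩
    show ⟪p, (2:ℝ)⁻¹ • (a + b)⟫ ≤ 1
    rw [real_inner_smul_right, inner_add_right]
    have h1 : ⟪p, a⟫ ≤ 1 := by rw [real_inner_comm]; exact ha p hp.1
    have h2 : ⟪p, b⟫ ≤ 1 := by rw [real_inner_comm]; exact hb p hp.2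
    linarith
  have hHM := H_subset_M h0K h0C hKcomp hCcomp hKconv hCconv
  -- compactness and interiors
  have hAcomp : IsCompact (K ∩ C) := hKcomp.inter_right hCcomp.isClosed
  have hBcomp : IsCompact (convexHull ℝ (K ∪ C)) := by
    have hKne : K.Nonempty := ⟨0, interior_subset h0K⟩
    have hCne : C.Nonempty := ⟨0, interior_subset h0C⟩
    have himg : convexHull ℝ (K ∪ C) =
        (fun p : ℝ × (EuclideanSpace ℝ (Fin n) × EuclideanSpace ℝ (Fin n)) =>
          (1 - p.1) • p.2.1 + p.1 • p.2.2) '' ((Set.Icc (0:ℝ) 1) ×ˢ (K ×ˢ C)) := by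
      apply Set.Subset.antisymm
      · rw [convexHull_union hKne hCne, hKconv.convexHull_eq, hCconv.convexHull_eq]
        rintro x hx
        rw [mem_convexJoin] at hx
        obtain ⟨k, hk, c, hc, hseg⟩ := hx
        obtain ⟨a, b, ha, hb, hab, rfl⟩ := hseg
        refine ⟨(b, (k, c)), ⟨⟨hb, by linarith⟩, hk, hc⟩, ?_⟩
        show (1 - b) • k + b • c = a • k + b • c
        rw [show (1:ℝ) - b = a by linarith]
      · rintro x ⟨⟨a, k, c⟩, ⟨⟨ha0, ha1⟩, hk, hc⟩, rfl⟩
        exact (convex_convexHull ℝ (K ∪ C)) (subset_convexHull ℝ _ (Or.inl hk))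
          (subset_convexHull ℝ _ (Or.inr hc)) (by linarith) ha0 (by ring)
    rw [himg]
    exact ((isCompact_Icc).prod (hKcomp.prod hCcomp)).image
      (((continuous_const.sub continuous_fst).smul (continuous_fst.comp continuous_snd)).add
        (continuous_fst.smul (continuous_snd.comp continuous_snd)))
  have hMcomp : IsCompact ((2:ℝ)⁻¹ • (K + C)) := (hKcomp.add hCcomp).smul _
  have hMconv : Convex ℝ ((2:ℝ)⁻¹ • (K + C)) := (hKconv.add hCconv).smul _
  have h0B : (0 : EuclideanSpace ℝ (Fin n)) ∈ interior (convexHull ℝ (K ∪ C)) :=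
    interior_mono hAB h0
  have h0M : (0 : EuclideanSpace ℝ (Fin n)) ∈ interior ((2:ℝ)⁻¹ • (K + C)) :=
    interior_mono hAM h0
  -- interior point of the half-sum of polars
  have h0half : (0 : EuclideanSpace ℝ (Fin n)) ∈
      interior ((2:ℝ)⁻¹ • (polarSet K + polarSet C)) := by
    obtain ⟨rK, hrK⟩ := hKcomp.isBounded.subset_closedBall 0
    obtain ⟨rC, hrC⟩ := hCcomp.isBounded.subset_closedBall 0
    set R : ℝ := max (max rK rC) 1 with hRdef
    have hR1 : (1:ℝ) ≤ R := le_max_right _ _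
    have hR0 : (0:ℝ) < R := lt_of_lt_of_le one_pos hR1
    have hKR : K ⊆ Metric.closedBall 0 R :=
      hrK.trans (Metric.closedBall_subset_closedBall ((le_max_left _ _).trans (le_max_left _ _)))
    have hCR : C ⊆ Metric.closedBall 0 R :=
      hrC.trans (Metric.closedBall_subset_closedBall ((le_max_right _ _).trans (le_max_left _ _)))
    have hball : Metric.ball (0 : EuclideanSpace ℝ (Fin n)) ((2*R)⁻¹) ⊆
        (2:ℝ)⁻¹ • (polarSet K + polarSet C) := by
      intro y hy
      rw [Metric.mem_ball, dist_zero_right] at hy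
      have haK : (2:ℝ) • y ∈ polarSet K := by
        intro x hx
        have hxn : ‖x‖ ≤ R := by
          have := hKR hx
          rwa [Metric.mem_closedBall, dist_zero_right] at this
        calc ⟪(2:ℝ) • y, x⟫ ≤ ‖(2:ℝ) • y‖ * ‖x‖ := real_inner_le_norm _ _
        _ ≤ (2 * ‖y‖) * R := by
            rw [norm_smul]
            apply mul_le_mul _ hxn (norm_nonneg _) (by positivity)
            simp [Real.norm_eq_abs]
        _ ≤ 1 := by
            have h8 : (2 * R) * (2 * R)⁻¹ = 1 := mul_inv_cancel₀ (by positivity)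
            nlinarith [mul_lt_mul_of_pos_left hy (by positivity : (0:ℝ) < 2 * R),
              norm_nonneg y]
      refine ⟨(2:ℝ) • y + 0, Set.add_mem_add haK (zero_mem_polarSet C), ?_⟩
      show (2:ℝ)⁻¹ • ((2:ℝ) • y + 0) = y
      rw [add_zero, smul_smul]
      norm_num
    rw [mem_interior]
    exact ⟨_, hball, Metric.isOpen_ball, Metric.mem_ball_self (by positivity)⟩
  have hHcomp : IsCompact (polarSet ((2:ℝ)⁻¹ • (polarSet K + polarSet C))) :=
    polarSet_isCompact h0half
  rw [optCont_iff hAcomp hBcomp (convex_convexHull ℝ _) h0B,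
      optCont_iff hHcomp hMcomp hMconv h0M]
  constructor
  · rintro ⟨-, hP⟩
    refine ⟨hHM, fun t => ?_⟩
    obtain ⟨u, huB, ⟨p, hpA, hup⟩, hut⟩ := hP t
    exact ⟨u, polarSet_anti hMB huB, ⟨p, hAH hpA, hup⟩, hut⟩
  · rintro ⟨-, hP⟩
    refine ⟨hAB, fun t => ?_⟩
    obtain ⟨v, hvM, ⟨q, hqH, hvq⟩, hvt⟩ := hP t
    obtain ⟨hvB, hqA⟩ := trans21 h0K h0C hKcomp hCcomp hKconv hCconv hvM hqH hvq
    exact ⟨v, hvB, ⟨q, hqA, hvq⟩, hvt⟩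
end

section
/- Let n be even and let S = conv{p¹, …, p^{n+1}} ⊂ ℝ^n be a regular n-simplex with vertices satisfying ‖pⁱ‖ = 1 for all i, p¹ + … + p^{n+1} = 0, and (pⁱ)ᵀpʲ = −1/n for all i ≠ j. Then ((S° − S°)/2)° is optimally contained in (n(n+2)/(n+1)²)·((S − S)/2). -/
open Pointwise RealInnerProductSpace

variable {E : Type*} [NormedAddCommGroup E] [InnerProductSpace ℝ E]

/-!
Write `tᵢ = ⟪a, pᵢ⟫`. Then `∑ tᵢ = 0` and `a = n / (n + 1) • ∑ tᵢ • pᵢ`. Since every `-n • pⱼ`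
lies in `S°`, the body `K = ((S° - S°) / 2)°` is exactly `{a | tᵢ - tⱼ ≤ 2 / n for all i, j}`.
For such `a`, double counting over the positive and the nonpositive coordinates gives
`∑ max tᵢ 0 ≤ (n + 2) / (2 (n + 1))` when `n + 1` is odd, which is precisely what is needed to
write `a` as `n (n + 2) / (n + 1)² • (x - y) / 2` with `x, y ∈ S`.

For optimality, the point `a` with `n / 2` coordinates equal to `(n + 2) / (n (n + 1))` and the
others equal to `-1 / (n + 1)` lies in `K` together with `-a`, and `u = (n + 1)² / (n + 2) • a`
is at most `1` on the symmetric convex body `C` and equals `1` at `a`. If `a` and `-a` both lie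
in `ρ • C + t`, then `a` is `ρ` times a midpoint of two points of `C`, so `1 = ⟪u, a⟫ ≤ ρ`.
-/

open Finset

section Convexity

variable {ι V : Type*} [AddCommGroup V] [Module ℝ V]

lemma inner_le_of_mem_convexHull {p : ι → E} {v : E} {M : ℝ} (h : ∀ i, ⟪v, p i⟫ ≤ M) {x : E}
    (hx : x ∈ convexHull ℝ (Set.range p)) : ⟪v, x⟫ ≤ M :=
  convexHull_min (Set.range_subset_iff.2 h) (convex_halfSpace_le (innerₛₗ ℝ v).isLinear M) hx

variable [Fintype ι]

lemma sum_smul_mem_convexHull {p : ι → V} {w : ι → ℝ} (hw₀ : ∀ i, 0 ≤ w i)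
    (hw₁ : ∑ i, w i = 1) : ∑ i, w i • p i ∈ convexHull ℝ (Set.range p) :=
  (convex_convexHull ℝ _).sum_mem (fun i _ => hw₀ i) hw₁ fun i _ =>
    subset_convexHull ℝ _ ⟨i, rfl⟩

lemma sum_smul_mem_convexHull_add_neg [Nonempty ι] {p : ι → V} {ν : ι → ℝ}
    (hν : ∑ i, ν i = 0) (hpos : ∑ i, max (ν i) 0 ≤ 1) :
    ∑ i, ν i • p i ∈ convexHull ℝ (Set.range p) + -convexHull ℝ (Set.range p) := by
  set δ := (1 - ∑ i, max (ν i) 0) / Fintype.card ι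
  have hδ : 0 ≤ δ := div_nonneg (sub_nonneg.2 hpos) (Nat.cast_nonneg _)
  have hneg : ∀ i, max (-ν i) 0 = max (ν i) 0 - ν i := fun i => by
    rcases le_total (ν i) 0 with h | h
    · rw [max_eq_left (neg_nonneg.2 h), max_eq_right h]; ring
    · rw [max_eq_right (neg_nonpos.2 h), max_eq_left h, sub_self]
  have hweight : ∀ f : ι → ℝ, ∑ i, f i = ∑ i, max (ν i) 0 → ∑ i, (f i + δ) = 1 := by
    intro f hf
    rw [sum_add_distrib, hf, sum_const, card_univ, nsmul_eq_mul, mul_div_cancel₀ _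
      (Nat.cast_ne_zero.2 Fintype.card_ne_zero)]
    ring
  refine ⟨∑ i, (max (ν i) 0 + δ) • p i,
    sum_smul_mem_convexHull (fun i => add_nonneg (le_max_right _ _) hδ) (hweight _ rfl),
    -∑ i, (max (-ν i) 0 + δ) • p i, ?_, ?_⟩
  · refine Set.neg_mem_neg.2 (sum_smul_mem_convexHull
      (fun i => add_nonneg (le_max_right _ _) hδ) (hweight _ ?_))
    simp only [hneg, sum_sub_distrib, hν, sub_zero]
  · dsimp only
    rw [← sub_eq_add_neg, ← sum_sub_distrib]
    exact sum_congr rfl fun i _ => by rw [← sub_smul, hneg]; congr 1; ring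

lemma neg_smul_add_neg (c : ℝ) (A : Set V) : -(c • (A + -A)) = c • (A + -A) := by
  rw [← Set.smul_set_neg, neg_add, neg_neg, add_comm]

end Convexity

lemma mem_polarSet_half_add_neg_iff {A : Set E} {a : E} :
    a ∈ polarSet ((2 : ℝ)⁻¹ • (A + -A)) ↔ ∀ q₁ ∈ A, ∀ q₂ ∈ A, ⟪a, q₁⟫ - ⟪a, q₂⟫ ≤ 2 := by
  constructor
  · intro h q₁ h₁ q₂ h₂
    have := h _ (Set.smul_mem_smul_set (Set.add_mem_add h₁ (Set.neg_mem_neg.2 h₂)))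
    rw [real_inner_smul_right, inner_add_right, inner_neg_right] at this
    linarith
  · rintro h _ ⟨_, ⟨q₁, h₁, q₂, h₂, rfl⟩, rfl⟩
    have := h q₁ h₁ (-q₂) h₂
    rw [real_inner_smul_right, inner_add_right]
    rw [inner_neg_right] at this
    linarith

lemma mem_polarSet_smul_half_add_neg {ι : Type*} {p : ι → E} {u : E} {c L U : ℝ} (hc : 0 ≤ c)
    (hL : ∀ i, L ≤ ⟪u, p i⟫) (hU : ∀ i, ⟪u, p i⟫ ≤ U) (hLU : c * (U - L) ≤ 2) :
    u ∈ polarSet (c • ((2 : ℝ)⁻¹ • (convexHull ℝ (Set.range p) + -convexHull ℝ (Set.range p)))) := by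
  rintro _ ⟨_, ⟨_, ⟨x₁, h₁, x₂, h₂, rfl⟩, rfl⟩, rfl⟩
  have hx₁ := inner_le_of_mem_convexHull hU h₁
  have hx₂ := inner_le_of_mem_convexHull (v := -u) (M := -L)
    (fun i => by rw [inner_neg_left]; linarith [hL i]) (x := -x₂) h₂
  rw [inner_neg_neg] at hx₂
  rw [real_inner_smul_right, real_inner_smul_right, inner_add_right]
  nlinarith [mul_le_mul_of_nonneg_left (add_le_add hx₁ hx₂) hc]

lemma optCont_of_touching {K C : Set E} {a u : E} (hKC : K ⊆ C) (hC : Convex ℝ C)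
    (hCneg : -C = C) (ha : a ∈ K) (ha' : -a ∈ K) (hu : u ∈ polarSet C) (hua : ⟪u, a⟫ = 1) :
    OptCont K C := by
  refine ⟨hKC, ?_⟩
  rintro ⟨ρ, hρ₀, hρ₁, t, hK⟩
  obtain ⟨_, ⟨z₁, hz₁, rfl⟩, _, rfl, h₁⟩ := hK ha
  obtain ⟨_, ⟨z₂, hz₂, rfl⟩, _, rfl, h₂⟩ := hK ha'
  have hmid : (2 : ℝ)⁻¹ • z₁ + (2 : ℝ)⁻¹ • -z₂ ∈ C :=
    hC hz₁ (hCneg ▸ Set.neg_mem_neg.2 hz₂) (by norm_num) (by norm_num) (by norm_num)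
  have ha_eq : a = ρ • ((2 : ℝ)⁻¹ • z₁ + (2 : ℝ)⁻¹ • -z₂) := by
    linear_combination (norm := module) -(2 : ℝ)⁻¹ • (h₁ - h₂)
  have := hu _ hmid
  rw [ha_eq, real_inner_smul_right] at hua
  nlinarith

section Combinatorics

variable {ι : Type*} [Fintype ι]

lemma four_mul_mul_le_of_add_eq_succ {n k l : ℕ} (hn : Even n) (h : k + l = n + 1) :
    4 * (k * l) ≤ n * (n + 2) := by
  obtain ⟨m, rfl⟩ := hn
  have hkl : (k : ℤ) - l ≠ 0 := by omega
  have hsq : (1 : ℤ) ≤ ((k : ℤ) - l) ^ 2 := one_le_sq_iff_one_le_abs _ |>.2 (Int.one_le_abs hkl)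
  have h' : (k : ℤ) + l = m + m + 1 := by exact_mod_cast h
  zify
  nlinarith

lemma sum_max_zero_le_of_sub_le {n : ℕ} (hn : Even n) (hn₀ : 0 < n)
    (hι : Fintype.card ι = n + 1) {t : ι → ℝ} (ht : ∑ i, t i = 0)
    (hsub : ∀ i j, t i - t j ≤ 2 / n) :
    ∑ i, max (t i) 0 ≤ (n + 2) / (2 * (n + 1)) := by
  classical
  set A := univ.filter fun i => 0 < t i
  set B := univ.filter fun i => ¬0 < t i
  have hcard : #A + #B = n + 1 := by
    rw [card_filter_add_card_filter_not, card_univ, hι]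
  have hpos : ∑ i, max (t i) 0 = ∑ i ∈ A, t i := by
    rw [sum_filter]
    exact sum_congr rfl fun i _ => by
      split_ifs with h
      exacts [max_eq_left h.le, max_eq_right (not_lt.1 h)]
  have hB : ∑ j ∈ B, t j = -∑ i ∈ A, t i := by
    rw [eq_neg_iff_add_eq_zero, add_comm, sum_filter_add_sum_filter_not, ht]
  have hdouble : ∑ i ∈ A, ∑ j ∈ B, (t i - t j) = (n + 1) * ∑ i ∈ A, t i := by
    have hcardR : (#A : ℝ) + #B = n + 1 := by exact_mod_cast hcard
    simp only [sum_sub_distrib, sum_const, nsmul_eq_mul, hB, ← mul_sum]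
    linear_combination (∑ i ∈ A, t i) * hcardR
  have hle : ∑ i ∈ A, ∑ j ∈ B, (t i - t j) ≤ #A * #B * (2 / n) := by
    calc ∑ i ∈ A, ∑ j ∈ B, (t i - t j) ≤ ∑ _i ∈ A, ∑ _j ∈ B, (2 / n : ℝ) :=
          sum_le_sum fun i _ => sum_le_sum fun j _ => hsub i j
      _ = #A * #B * (2 / n) := by simp only [sum_const, nsmul_eq_mul]; ring
  have hAB : (4 : ℝ) * (#A * #B) ≤ n * (n + 2) := by
    exact_mod_cast four_mul_mul_le_of_add_eq_succ hn hcard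
  have hn' : (0 : ℝ) < n := by exact_mod_cast hn₀
  rw [hpos, le_div_iff₀ (by positivity)]
  have : (#A : ℝ) * #B * (2 / n) ≤ (n + 2) / 2 := by
    rw [mul_div_assoc', div_le_div_iff₀ hn' two_pos]
    nlinarith
  nlinarith

lemma sum_mul_le_neg_card_mul {μ s : ι → ℝ} {L : ℝ} (hμ : ∑ i, μ i = 0) (hs : ∑ i, s i = 0)
    (hL : ∀ i, L ≤ μ i) (hs₁ : ∀ i, s i ≤ 1) : ∑ i, μ i * s i ≤ -(Fintype.card ι * L) := by
  calc ∑ i, μ i * s i ≤ ∑ i, (μ i - L + L * s i) :=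
        sum_le_sum fun i _ => by nlinarith [hL i, hs₁ i]
    _ = -(Fintype.card ι * L) := by
        rw [sum_add_distrib, sum_sub_distrib, ← mul_sum, hμ, hs, sum_const, card_univ,
          nsmul_eq_mul]
        ring

/-- The two values are the extremes allowed by `t i - t j ≤ 2 / n`; taking them `n / 2` and
`n / 2 + 1` times balances the sum and makes `∑ i, t i ^ 2` as large as these bounds permit. -/
lemma exists_sum_eq_zero_sum_sq_eq {n : ℕ} (hn : Even n) (hn₀ : 0 < n)
    (hι : Fintype.card ι = n + 1) :
    ∃ t : ι → ℝ, ∑ i, t i = 0 ∧ (∀ i, -1 / (n + 1) ≤ t i ∧ t i ≤ (n + 2) / (n * (n + 1))) ∧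
      ∑ i, t i ^ 2 = (n + 2) / (n * (n + 1)) := by
  classical
  obtain ⟨k, hk⟩ := hn
  obtain ⟨A, -, hA⟩ := exists_subset_card_eq (s := (univ : Finset ι)) (n := k)
    (by rw [card_univ, hι]; omega)
  have hAc : #Aᶜ = k + 1 := by rw [card_compl, hι, hA]; omega
  have hsum : ∀ x y : ℝ, ∑ i, (if i ∈ A then x else y) = k * x + (k + 1) * y := by
    intro x y
    simp [sum_ite, ← compl_eq_univ_sdiff, filter_not, hA, hAc]
  have hn' : (n : ℝ) = 2 * k := by rw [hk]; push_cast; ring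
  have hk₀ : (0 : ℝ) < k := by exact_mod_cast (by omega : 0 < k)
  refine ⟨fun i => if i ∈ A then (n + 2) / (n * (n + 1)) else -1 / (n + 1), ?_, fun i => ?_, ?_⟩
  · rw [hsum, hn']
    field_simp
    ring
  · have hlt : -1 / ((n : ℝ) + 1) ≤ (n + 2) / (n * (n + 1)) := by
      rw [div_le_div_iff₀ (by positivity) (by positivity)]
      nlinarith
    dsimp only
    split_ifs <;> simp [hlt]
  · simp only [apply_ite (· ^ 2), hsum, hn']
    field_simp
    ring

end Combinatorics

structure IsCenteredRegularSimplex {n : ℕ} (p : Fin (n + 1) → E) : Prop where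
  norm_eq_one : ∀ i, ‖p i‖ = 1
  sum_eq_zero : ∑ i, p i = 0
  inner_eq : ∀ i j, i ≠ j → ⟪p i, p j⟫ = -1 / n

namespace IsCenteredRegularSimplex

variable {n : ℕ} {p : Fin (n + 1) → E}

lemma inner_self (hp : IsCenteredRegularSimplex p) (i : Fin (n + 1)) : ⟪p i, p i⟫ = 1 := by
  rw [real_inner_self_eq_norm_sq, hp.norm_eq_one, one_pow]

lemma finrank_pos (hp : IsCenteredRegularSimplex p) [FiniteDimensional ℝ E] :
    0 < Module.finrank ℝ E :=
  Module.finrank_pos_iff_exists_ne_zero.2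
    ⟨p 0, ne_zero_of_norm_ne_zero (by rw [hp.norm_eq_one]; exact one_ne_zero)⟩

lemma sum_inner_eq_zero (hp : IsCenteredRegularSimplex p) (a : E) : ∑ i, ⟪a, p i⟫ = 0 := by
  rw [← inner_sum, hp.sum_eq_zero, inner_zero_right]

lemma inner_sum_smul (hp : IsCenteredRegularSimplex p) (g : Fin (n + 1) → ℝ) (j : Fin (n + 1)) :
    ⟪∑ i, g i • p i, p j⟫ = g j * (1 + 1 / n) - (∑ i, g i) / n := by
  have h : ∀ i, ⟪g i • p i, p j⟫ = g i * (-1 / n) + if i = j then g j * (1 + 1 / n) else 0 := by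
    intro i
    rw [real_inner_smul_left]
    split_ifs with hij
    · subst hij
      rw [hp.inner_self]
      ring
    · rw [hp.inner_eq i j hij, add_zero]
  simp only [sum_inner, h, sum_add_distrib, ← sum_mul, sum_ite_eq', mem_univ, if_true]
  ring

lemma inner_sum_smul_of_sum_eq_zero (hp : IsCenteredRegularSimplex p) (hn : 0 < n)
    {g : Fin (n + 1) → ℝ} (hg : ∑ i, g i = 0) (j : Fin (n + 1)) :
    ⟪∑ i, (n / (n + 1) * g i) • p i, p j⟫ = g j := by
  have hn' : (n : ℝ) ≠ 0 := by exact_mod_cast hn.ne'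
  rw [hp.inner_sum_smul, ← mul_sum, hg]
  field_simp
  ring

lemma linearIndependent_castSucc (hp : IsCenteredRegularSimplex p) :
    LinearIndependent ℝ fun i : Fin n => p i.castSucc := by
  rw [Fintype.linearIndependent_iff]
  intro g hg j
  have hn : (n : ℝ) ≠ 0 := by exact_mod_cast j.pos.ne'
  have h := hp.inner_sum_smul (Fin.snoc g 0)
  simp only [Fin.sum_univ_castSucc, Fin.snoc_castSucc, Fin.snoc_last, zero_smul, add_zero, hg,
    inner_zero_left] at h
  have hsum : ∑ i, g i = 0 := by
    have := h (Fin.last n)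
    rw [Fin.snoc_last, zero_mul, zero_sub, eq_comm, neg_eq_zero, div_eq_zero_iff] at this
    exact this.resolve_right hn
  have := h j.castSucc
  rw [Fin.snoc_castSucc, hsum, zero_div, sub_zero, eq_comm, mul_eq_zero] at this
  exact this.resolve_right (by positivity)

lemma neg_smul_mem_polarSet (hp : IsCenteredRegularSimplex p) (j : Fin (n + 1)) :
    -(n : ℝ) • p j ∈ polarSet (convexHull ℝ (Set.range p)) := fun x hx =>
  inner_le_of_mem_convexHull (fun i => by
    rw [real_inner_smul_left]
    by_cases hij : j = i
    · rw [hij, hp.inner_self]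
      linarith [(n.cast_nonneg : (0 : ℝ) ≤ n)]
    · rw [hp.inner_eq j i hij, neg_div, neg_mul_neg, mul_one_div]
      exact div_self_le_one _) hx

variable [FiniteDimensional ℝ E]

lemma eq_sum_inner_smul (hp : IsCenteredRegularSimplex p) (hE : Module.finrank ℝ E = n)
    (a : E) : a = ∑ i, (n / (n + 1) * ⟪a, p i⟫) • p i := by
  have hn : 0 < n := hE ▸ hp.finrank_pos
  have : Nonempty (Fin n) := ⟨⟨0, hn⟩⟩
  let b := basisOfLinearIndependentOfCardEqFinrank hp.linearIndependent_castSucc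
    (by rw [Fintype.card_fin, hE])
  refine InnerProductSpace.ext_inner_right_basis b fun j => ?_
  rw [coe_basisOfLinearIndependentOfCardEqFinrank,
    hp.inner_sum_smul_of_sum_eq_zero hn (hp.sum_inner_eq_zero a)]

lemma real_inner_self_eq_sum_sq (hp : IsCenteredRegularSimplex p) (hE : Module.finrank ℝ E = n)
    (a : E) : ⟪a, a⟫ = n / (n + 1) * ∑ i, ⟪a, p i⟫ ^ 2 := by
  calc ⟪a, a⟫ = ⟪a, ∑ i, (n / (n + 1) * ⟪a, p i⟫) • p i⟫ := by
        rw [← hp.eq_sum_inner_smul hE a]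
    _ = n / (n + 1) * ∑ i, ⟪a, p i⟫ ^ 2 := by
        simp only [inner_sum, real_inner_smul_right, mul_sum, sq, mul_assoc]

lemma inner_le_of_mem_polarSet (hp : IsCenteredRegularSimplex p) (hE : Module.finrank ℝ E = n)
    {a q : E} (hq : q ∈ polarSet (convexHull ℝ (Set.range p))) {L : ℝ}
    (hL : ∀ i, L ≤ ⟪a, p i⟫) : ⟪a, q⟫ ≤ -(n * L) := by
  have hbound := sum_mul_le_neg_card_mul (hp.sum_inner_eq_zero a) (hp.sum_inner_eq_zero q) hL
    fun i => hq _ (subset_convexHull ℝ _ ⟨i, rfl⟩)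
  rw [Fintype.card_fin, Nat.cast_add_one] at hbound
  rw [hp.eq_sum_inner_smul hE a, sum_inner]
  simp only [real_inner_smul_left, fun i => real_inner_comm q (p i), mul_assoc, ← mul_sum]
  calc n / (n + 1) * ∑ i, ⟪a, p i⟫ * ⟪q, p i⟫ ≤ n / (n + 1) * -((n + 1) * L) :=
        mul_le_mul_of_nonneg_left hbound (by positivity)
    _ = -(n * L) := by field_simp

lemma mem_polarSet_iff (hp : IsCenteredRegularSimplex p) (hE : Module.finrank ℝ E = n) {a : E} :
    a ∈ polarSet ((2 : ℝ)⁻¹ • (polarSet (convexHull ℝ (Set.range p)) +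
      -polarSet (convexHull ℝ (Set.range p)))) ↔ ∀ i j, ⟪a, p i⟫ - ⟪a, p j⟫ ≤ 2 / n := by
  have hn : (0 : ℝ) < n := by exact_mod_cast hE ▸ hp.finrank_pos
  rw [mem_polarSet_half_add_neg_iff]
  constructor
  · intro h i j
    have := h _ (hp.neg_smul_mem_polarSet j) _ (hp.neg_smul_mem_polarSet i)
    rw [real_inner_smul_right, real_inner_smul_right] at this
    rw [le_div_iff₀' hn]
    linarith
  · intro h q₁ hq₁ q₂ hq₂
    obtain ⟨j₀, hj₀⟩ := Finite.exists_min fun i => ⟪a, p i⟫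
    have h₁ := hp.inner_le_of_mem_polarSet hE hq₁ hj₀
    have h₂ := hp.inner_le_of_mem_polarSet hE (a := -a) hq₂ (L := -(⟪a, p j₀⟫ + 2 / n))
      fun i => by rw [inner_neg_left]; linarith [h i j₀]
    rw [inner_neg_left] at h₂
    have : (n : ℝ) * (2 / n) = 2 := mul_div_cancel₀ _ hn.ne'
    linarith

lemma polarSet_subset (hp : IsCenteredRegularSimplex p) (hE : Module.finrank ℝ E = n)
    (hn : Even n) :
    polarSet ((2 : ℝ)⁻¹ • (polarSet (convexHull ℝ (Set.range p)) +
      -polarSet (convexHull ℝ (Set.range p)))) ⊆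
      ((n : ℝ) * (n + 2) / (n + 1) ^ 2) •
        ((2 : ℝ)⁻¹ • (convexHull ℝ (Set.range p) + -convexHull ℝ (Set.range p))) := by
  intro a ha
  have hn₀ : 0 < n := hE ▸ hp.finrank_pos
  set r : ℝ := 2 * (n + 1) / (n + 2) with hr_def
  have hr : 0 ≤ r := by positivity
  have hmax : ∀ i, max (r * ⟪a, p i⟫) 0 = r * max ⟪a, p i⟫ 0 := fun i => by
    rw [mul_max_of_nonneg _ _ hr, mul_zero]
  have hpos : ∑ i, max (r * ⟪a, p i⟫) 0 ≤ 1 := by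
    rw [sum_congr rfl fun i _ => hmax i, ← mul_sum]
    calc r * ∑ i, max ⟪a, p i⟫ 0 ≤ r * ((n + 2) / (2 * (n + 1))) :=
          mul_le_mul_of_nonneg_left (sum_max_zero_le_of_sub_le hn hn₀ (Fintype.card_fin _)
            (hp.sum_inner_eq_zero a) ((hp.mem_polarSet_iff hE).1 ha)) hr
      _ = 1 := by rw [hr_def]; field_simp
  have hmem := sum_smul_mem_convexHull_add_neg (p := p)
    (by rw [← mul_sum, hp.sum_inner_eq_zero, mul_zero]) hpos
  have ha_eq : ((n : ℝ) * (n + 2) / (n + 1) ^ 2) • (2 : ℝ)⁻¹ • ∑ i, (r * ⟪a, p i⟫) • p i = a := by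
    conv_rhs => rw [hp.eq_sum_inner_smul hE a]
    simp only [smul_sum, smul_smul]
    refine sum_congr rfl fun i _ => ?_
    congr 1
    rw [hr_def]
    field_simp
  exact ha_eq ▸ Set.smul_mem_smul_set (Set.smul_mem_smul_set hmem)

lemma exists_touching (hp : IsCenteredRegularSimplex p) (hE : Module.finrank ℝ E = n)
    (hn : Even n) :
    ∃ a u : E,
      a ∈ polarSet ((2 : ℝ)⁻¹ • (polarSet (convexHull ℝ (Set.range p)) +
        -polarSet (convexHull ℝ (Set.range p)))) ∧
      -a ∈ polarSet ((2 : ℝ)⁻¹ • (polarSet (convexHull ℝ (Set.range p)) +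
        -polarSet (convexHull ℝ (Set.range p)))) ∧
      u ∈ polarSet (((n : ℝ) * (n + 2) / (n + 1) ^ 2) •
        ((2 : ℝ)⁻¹ • (convexHull ℝ (Set.range p) + -convexHull ℝ (Set.range p)))) ∧
      ⟪u, a⟫ = 1 := by
  have hn₀ : 0 < n := hE ▸ hp.finrank_pos
  obtain ⟨t, ht, hbounds, hsq⟩ := exists_sum_eq_zero_sum_sq_eq hn hn₀ (Fintype.card_fin _)
  set a := ∑ i, (n / (n + 1) * t i) • p i
  have hat : ∀ j, ⟪a, p j⟫ = t j := hp.inner_sum_smul_of_sum_eq_zero hn₀ ht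
  have hwidth : (n + 2) / (n * (n + 1)) - -1 / (n + 1) = (2 / n : ℝ) := by
    field_simp
    ring
  set l : ℝ := (n + 1) ^ 2 / (n + 2) with hl_def
  refine ⟨a, l • a, (hp.mem_polarSet_iff hE).2 fun i j => ?_,
    (hp.mem_polarSet_iff hE).2 fun i j => ?_, ?_, ?_⟩
  · rw [hat, hat]
    linarith [(hbounds i).2, (hbounds j).1]
  · rw [inner_neg_left, inner_neg_left, hat, hat]
    linarith [(hbounds j).2, (hbounds i).1]
  · refine mem_polarSet_smul_half_add_neg (L := l * (-1 / (n + 1)))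
      (U := l * ((n + 2) / (n * (n + 1)))) (by positivity) (fun i => ?_) (fun i => ?_) ?_
    · rw [real_inner_smul_left, hat]
      exact mul_le_mul_of_nonneg_left (hbounds i).1 (by positivity)
    · rw [real_inner_smul_left, hat]
      exact mul_le_mul_of_nonneg_left (hbounds i).2 (by positivity)
    · rw [← mul_sub, hwidth, hl_def]
      refine le_of_eq ?_
      field_simp
  · rw [real_inner_smul_left, hp.real_inner_self_eq_sum_sq hE]
    simp only [hat, hsq, hl_def]
    field_simp

end IsCenteredRegularSimplex

theorem stmt_18 {n : ℕ} (hn : Even n) (p : Fin (n + 1) → EuclideanSpace ℝ (Fin n))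
    (hnorm : ∀ i, ‖p i‖ = 1) (hsum : ∑ i, p i = 0)
    (hip : ∀ i j, i ≠ j → (⟪p i, p j⟫ : ℝ) = -1 / n)
    (S : Set (EuclideanSpace ℝ (Fin n))) (hS : S = convexHull ℝ (Set.range p)) :
    OptCont (polarSet ((2:ℝ)⁻¹ • (polarSet S + -polarSet S)))
      (((n : ℝ) * (n + 2) / (n + 1)^2) • ((2:ℝ)⁻¹ • (S + -S))) := by
  subst hS
  have hp : IsCenteredRegularSimplex p := ⟨hnorm, hsum, hip⟩
  have hE : Module.finrank ℝ (EuclideanSpace ℝ (Fin n)) = n := finrank_euclideanSpace_fin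
  have hS := convex_convexHull ℝ (Set.range p)
  obtain ⟨a, u, ha, ha', hu, hua⟩ := hp.exists_touching hE hn
  exact optCont_of_touching (hp.polarSet_subset hE hn) ((hS.add hS.neg).smul _ |>.smul _)
    (by rw [← Set.smul_set_neg, neg_smul_add_neg]) ha ha' hu hua
end
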